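/- (Necessity of FdB via characteristic series.) Let m be a weight and suppose η(x) = Σ_{n≥1} i^{n-1} s_n x^n is a formal power series with s_n ≥ m_n > 0 for all n. Then the n-th coefficient of η∘η equals i^{n-1} Σ_{r≥1} Σ_{n_1+⋯+n_r=n, n_i≥1} s_r s_{n_1}⋯s_{n_r}; in particular |(η∘η)_n| ≥ Σ_{r≥1} Σ_{n_1+⋯+n_r=n} m_r m_{n_1}⋯m_{n_r}, so if sup_n (|(η∘η)_n|/m_n)^{1/n} < ∞ then m is FdB. -/

import Mathlib

/-!
The term of `(η ∘ η)_n` indexed by a composition `n = n_1 + ⋯ + n_r` carries the phase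
`i^(r-1) i^(n_1-1) ⋯ i^(n_r-1) = i^(n-1)`, the same for every composition, so no cancellation
occurs: `|(η ∘ η)_n| = Σ s_r s_{n_1} ⋯ s_{n_r} ≥ Σ m_r m_{n_1} ⋯ m_{n_r}`, and this sum dominates
each of its terms. A bound `|(η ∘ η)_n| ≤ C^n m_n` therefore gives the FdB inequality with
`λ = max C 1`.
-/

open Finset

namespace Composition

variable {n : ℕ} (c : Composition n)

theorem sum_blocksFun_sub_one : ∑ i, (c.blocksFun i - 1) = n - c.length := by
  rw [sum_tsub_distrib _ fun i _ => c.one_le_blocksFun i, c.sum_blocksFun]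
  simp

theorem prod_map_blocks {M : Type*} [CommMonoid M] (f : ℕ → M) :
    (c.blocks.map f).prod = ∏ i, f (c.blocksFun i) := by
  conv_lhs => rw [← c.ofFn_blocksFun]
  rw [List.map_ofFn, List.prod_ofFn]
  rfl

theorem pow_length_sub_one_mul_prod_pow {M : Type*} [CommMonoid M] (z : M) (hn : 0 < n) :
    z ^ (c.length - 1) * ∏ i, z ^ (c.blocksFun i - 1) = z ^ (n - 1) := by
  have hlen_pos := c.length_pos_of_pos hn
  have hlen_le := c.length_le
  rw [prod_pow_eq_pow_sum, c.sum_blocksFun_sub_one, ← pow_add]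
  congr 1
  omega

end Composition

/-- The `n`-th coefficient of `a ∘ a` for a power series `a` without constant term. -/
def selfCompCoeff {R : Type*} [CommSemiring R] (a : ℕ → R) (n : ℕ) : R :=
  ∑ p : Composition n, a p.length * ∏ i, a (p.blocksFun i)

section SelfCompCoeff

variable {R : Type*} [CommSemiring R] {n : ℕ}

theorem selfCompCoeff_of_eq_pow_mul {a b : ℕ → R} {z : R}
    (hab : ∀ k, 1 ≤ k → a k = z ^ (k - 1) * b k) (hn : 0 < n) :
    selfCompCoeff a n = z ^ (n - 1) * selfCompCoeff b n := by
  rw [selfCompCoeff, selfCompCoeff, mul_sum]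
  refine sum_congr rfl fun p _ => ?_
  rw [hab _ (p.length_pos_of_pos hn), prod_congr rfl fun i _ => hab _ (p.one_le_blocksFun i),
    prod_mul_distrib, ← p.pow_length_sub_one_mul_prod_pow z hn]
  ring

theorem map_selfCompCoeff {S : Type*} [CommSemiring S] (f : R →+* S) (a : ℕ → R) (n : ℕ) :
    f (selfCompCoeff a n) = selfCompCoeff (f ∘ a) n := by
  simp [selfCompCoeff, map_sum, map_prod]

variable [PartialOrder R] [IsOrderedRing R]

theorem apply_length_mul_prod_nonneg {a : ℕ → R} (ha : ∀ k, 1 ≤ k → 0 ≤ a k) (hn : 0 < n)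
    (p : Composition n) : 0 ≤ a p.length * ∏ i, a (p.blocksFun i) :=
  mul_nonneg (ha _ (p.length_pos_of_pos hn)) (prod_nonneg fun i _ => ha _ (p.one_le_blocksFun i))

theorem apply_length_mul_prod_le_selfCompCoeff {a : ℕ → R} (ha : ∀ k, 1 ≤ k → 0 ≤ a k)
    (hn : 0 < n) (p : Composition n) :
    a p.length * ∏ i, a (p.blocksFun i) ≤ selfCompCoeff a n :=
  single_le_sum (fun q _ => apply_length_mul_prod_nonneg ha hn q) (mem_univ p)

theorem selfCompCoeff_mono {a b : ℕ → R} (ha : ∀ k, 1 ≤ k → 0 ≤ a k)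
    (hab : ∀ k, 1 ≤ k → a k ≤ b k) (hn : 0 < n) : selfCompCoeff a n ≤ selfCompCoeff b n := by
  refine sum_le_sum fun p _ => ?_
  have hlen := p.length_pos_of_pos hn
  exact mul_le_mul (hab _ hlen)
    (prod_le_prod (fun i _ => ha _ (p.one_le_blocksFun i)) fun i _ => hab _ (p.one_le_blocksFun i))
    (prod_nonneg fun i _ => ha _ (p.one_le_blocksFun i)) ((ha _ hlen).trans (hab _ hlen))

end SelfCompCoeff

theorem le_pow_mul_of_div_rpow_inv_le {x y C : ℝ} {n : ℕ} (hx : 0 ≤ x) (hy : 0 < y) (hn : 0 < n)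
    (h : (x / y) ^ (1 / (n : ℝ)) ≤ C) : x ≤ C ^ n * y := by
  have hxy : 0 ≤ x / y := div_nonneg hx hy.le
  have hC : 0 ≤ C := (Real.rpow_nonneg hxy _).trans h
  rw [one_div, Real.rpow_inv_le_iff_of_pos hxy hC (by positivity), Real.rpow_natCast] at h
  rwa [div_le_iff₀ hy] at h

/-- Necessity of the FdB condition via characteristic series: if
`η_n = i^{n-1} s_n` with `s_n ≥ m_n > 0`, then the coefficients of `η ∘ η`
have absolute values at least `Σ m_r m_{n₁} ⋯ m_{n_r}`, and their weighted
growth being exponentially bounded forces `m` to be FdB. -/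
theorem stmt_16 (m : ℕ → ℝ) (hm : ∀ n, 1 ≤ n → 0 < m n)
    (s : ℕ → ℝ) (hs : ∀ n, 1 ≤ n → m n ≤ s n)
    (η : ℕ → ℂ) (hη : ∀ n, 1 ≤ n → η n = Complex.I ^ (n - 1) * (s n : ℂ))
    (c : ℕ → ℂ)
    (hc : ∀ n : ℕ, c n = ∑ p : Composition n, η p.length * ∏ i, η (p.blocksFun i)) :
    (∀ n, 1 ≤ n → c n = Complex.I ^ (n - 1) *
      ((∑ p : Composition n, s p.length * ∏ i, s (p.blocksFun i) : ℝ) : ℂ)) ∧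
    (∀ n, 1 ≤ n →
      (∑ p : Composition n, m p.length * ∏ i, m (p.blocksFun i)) ≤
        ‖c n‖) ∧
    ((∃ C : ℝ, ∀ n, 1 ≤ n → (‖c n‖ / m n) ^ (1 / (n : ℝ)) ≤ C) →
      ∃ lam : ℝ, 1 ≤ lam ∧ ∀ ks : List ℕ, ks ≠ [] → (∀ i ∈ ks, 1 ≤ i) →
        m ks.length * (ks.map m).prod ≤ lam ^ ks.sum * m ks.sum) := by
  have hcoeff : ∀ n, 1 ≤ n → c n = Complex.I ^ (n - 1) * ((selfCompCoeff s n : ℝ) : ℂ) :=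
      fun n hn => by
    rw [hc, ← selfCompCoeff, ← Complex.ofRealHom_eq_coe, map_selfCompCoeff]
    exact selfCompCoeff_of_eq_pow_mul hη hn
  have hm0 : ∀ k, 1 ≤ k → 0 ≤ m k := fun k hk => (hm k hk).le
  have hlower : ∀ n, 1 ≤ n → selfCompCoeff m n ≤ ‖c n‖ := fun n hn => by
    rw [hcoeff n hn, norm_mul, norm_pow, Complex.norm_I, one_pow, one_mul, Complex.norm_real]
    exact (selfCompCoeff_mono hm0 hs hn).trans (Real.le_norm_self _)
  refine ⟨hcoeff, hlower, ?_⟩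
  rintro ⟨C, hC⟩
  have hC0 : 0 ≤ C :=
    (Real.rpow_nonneg (div_nonneg (norm_nonneg _) (hm0 1 le_rfl)) _).trans (hC 1 le_rfl)
  refine ⟨max C 1, le_max_right _ _, fun ks hne hpos => ?_⟩
  have hn : 0 < ks.sum := List.sum_pos _ hpos hne
  let p : Composition ks.sum := ⟨ks, hpos _, rfl⟩
  calc m ks.length * (ks.map m).prod = m p.length * ∏ i, m (p.blocksFun i) := by
        rw [← p.prod_map_blocks]
    _ ≤ ‖c ks.sum‖ := (apply_length_mul_prod_le_selfCompCoeff hm0 hn p).trans (hlower _ hn)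
    _ ≤ C ^ ks.sum * m ks.sum :=
        le_pow_mul_of_div_rpow_inv_le (norm_nonneg _) (hm _ hn) hn (hC _ hn)
    _ ≤ max C 1 ^ ks.sum * m ks.sum :=
        mul_le_mul_of_nonneg_right (pow_le_pow_left₀ hC0 (le_max_left _ _) _) (hm0 _ hn)
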